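/- arXiv:2502.04676 — 2 statements merged into one kernel-verified Lean document; each statement's English description precedes it below -/
import Mathlib

section
/- Let n ≥ 3 and 0 < s < 1, and let P be the Poisson kernel for the fractional Laplacian on the unit ball. Then for every k ∈ ℕ there exists a constant C_k > 0 depending only on n, s, k such that for all x ∈ ℝⁿ with |x| < 1/2 and all y ∈ ℝⁿ with |y| > 1, the map x ↦ P(x, y) is k-times differentiable at x and its k-th Fréchet derivative satisfies ‖D_x^k P(x, y)‖ ≤ C_k · P(x, y). -/
set_option maxHeartbeats 1000000


open MeasureTheory Metric Set Filter Topology Real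

noncomputable section

/-- Euclidean space `ℝⁿ`. -/
abbrev Eucl (n : ℕ) : Type := EuclideanSpace ℝ (Fin n)

/-- The normalizing constant `C_{n,s}` of the fractional Laplacian. -/
def fracConst (n : ℕ) (s : ℝ) : ℝ :=
  (∫ ζ : Eucl n,
    if h : 0 < n then (1 - Real.cos (ζ ⟨0, h⟩)) / ‖ζ‖ ^ ((n : ℝ) + 2 * s) else 0)⁻¹

/-- Membership in the space `L_{2s}`. -/
def memL2s (n : ℕ) (s : ℝ) (u : Eucl n → ℝ) : Prop :=
  MeasureTheory.LocallyIntegrable u volume ∧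
    MeasureTheory.Integrable
      (fun x : Eucl n => |u x| / (1 + ‖x‖ ^ ((n : ℝ) + 2 * s))) volume

/-- `u ∈ C^{1,1}_loc(D)`. -/
def C11loc {n : ℕ} (u : Eucl n → ℝ) (D : Set (Eucl n)) : Prop :=
  ∀ x ∈ D, ∃ ε > 0, ball x ε ⊆ D ∧ (∀ y ∈ ball x ε, DifferentiableAt ℝ u y) ∧
    ∃ K : NNReal, LipschitzOnWith K (fderiv ℝ u) (ball x ε)

/-- `u` solves `(-Δ)^s u = g` pointwise on `D`, in the principal value sense. -/
def solvesFracLap (n : ℕ) (s : ℝ) (u g : Eucl n → ℝ) (D : Set (Eucl n)) : Prop :=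
  ∀ x ∈ D, Filter.Tendsto
    (fun ε : ℝ => fracConst n s *
      ∫ y in {y : Eucl n | ε ≤ dist x y}, (u x - u y) / dist x y ^ ((n : ℝ) + 2 * s))
    (nhdsWithin 0 (Set.Ioi 0)) (nhds (g x))

/-- Sup of `|g|` over a set. -/
def supAbsOn {n : ℕ} (A : Set (Eucl n)) (g : Eucl n → ℝ) : ℝ :=
  sSup ((fun x => |g x|) '' A)

/-- Hölder seminorm of exponent `γ` over a set. -/
def holderSemi {n : ℕ} (A : Set (Eucl n)) (γ : ℝ) (g : Eucl n → ℝ) : ℝ :=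
  sSup {c : ℝ | ∃ x ∈ A, ∃ y ∈ A, x ≠ y ∧ c = |g x - g y| / dist x y ^ γ}

/-- Ln-Lipschitz seminorm over a set. -/
def logLipSemi {n : ℕ} (A : Set (Eucl n)) (g : Eucl n → ℝ) : ℝ :=
  sSup {c : ℝ | ∃ x ∈ A, ∃ y ∈ A, x ≠ y ∧
    c = |g x - g y| / (dist x y * |Real.log (min (dist x y) (1 / 2))|)}

/-- The Poisson kernel for the fractional Laplacian on the unit ball. -/
def fracPoissonKernel (n : ℕ) (s : ℝ) (x y : Eucl n) : ℝ :=
  Real.Gamma ((n : ℝ) / 2) * Real.sin (π * s) / π ^ ((n : ℝ) / 2 + 1) *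
    (((1 - ‖x‖ ^ 2) / (‖y‖ ^ 2 - 1)) ^ s / dist x y ^ n)

lemma contDiffOn_F (n : ℕ) (N : ℕ∞) :
    ContDiffOn ℝ N (fun w : Eucl n => (‖w‖ ^ n)⁻¹) {(0 : Eucl n)}ᶜ := by
  intro w hw
  have hw' : w ≠ 0 := hw
  exact (((contDiffAt_norm (𝕜 := ℝ) hw').pow n).inv
    (pow_ne_zero _ (norm_ne_zero_iff.mpr hw'))).contDiffWithinAt

lemma exists_deriv_bound {E : Type*} [NormedAddCommGroup E] [NormedSpace ℝ E] (k : ℕ)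
    {f : E → ℝ} {U K : Set E} (hU : IsOpen U) (hf : ContDiffOn ℝ (k : ℕ∞) f U)
    (hK : IsCompact K) (hKU : K ⊆ U) :
    ∃ C : ℝ, 1 ≤ C ∧ ∀ i ≤ k, ∀ x ∈ K, ‖iteratedFDeriv ℝ i f x‖ ≤ C := by
  have key : ∀ i : Fin (k+1), ∃ C, ∀ x ∈ K, ‖iteratedFDeriv ℝ i f x‖ ≤ C := by
    intro i
    have hcont : ContinuousOn (iteratedFDerivWithin ℝ i f U) U :=
      hf.continuousOn_iteratedFDerivWithin (by exact_mod_cast Nat.lt_succ_iff.mp i.2)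
        hU.uniqueDiffOn
    obtain ⟨C, hC⟩ := hK.exists_bound_of_continuousOn (hcont.mono hKU)
    exact ⟨C, fun x hx => by
      rw [← iteratedFDerivWithin_of_isOpen (i : ℕ) hU (hKU hx)]; exact hC x hx⟩
  choose C hC using key
  refine ⟨max 1 (∑ i, max (C i) 0), le_max_left _ _, fun i hi x hx => ?_⟩
  have h1 : ‖iteratedFDeriv ℝ i f x‖ ≤ C ⟨i, by omega⟩ := hC ⟨i, by omega⟩ x hx
  have h2 : C ⟨i, by omega⟩ ≤ ∑ j, max (C j) 0 :=
    le_trans (le_max_left _ _) (Finset.single_le_sum (f := fun j => max (C j) 0)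
      (fun j _ => le_max_right _ _) (Finset.mem_univ (⟨i, by omega⟩ : Fin (k+1))))
  exact h1.trans (h2.trans (le_max_right _ _))

lemma F_scaling_bound (n : ℕ) (hn : 0 < n) (k : ℕ) :
    ∃ C : ℝ, 1 ≤ C ∧ ∀ i ≤ k, ∀ w : Eucl n, 1/2 ≤ ‖w‖ →
      ‖iteratedFDeriv ℝ i (fun w : Eucl n => (‖w‖ ^ n)⁻¹) w‖ ≤ C * (‖w‖ ^ n)⁻¹ := by
  set F : Eucl n → ℝ := fun w => (‖w‖ ^ n)⁻¹ with hF
  set V : Set (Eucl n) := {(0 : Eucl n)}ᶜ with hVdef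
  have hV : IsOpen V := isOpen_compl_singleton
  have hsub : sphere (0 : Eucl n) 1 ⊆ V := by
    intro w hw
    have : ‖w‖ = 1 := mem_sphere_zero_iff_norm.mp hw
    simp only [hVdef, mem_compl_iff, mem_singleton_iff]
    intro h; rw [h] at this; simp at this
  obtain ⟨M, hM1, hM⟩ := exists_deriv_bound k hV (contDiffOn_F n k)
    (isCompact_sphere 0 1) hsub
  have h2k : (1:ℝ) ≤ 2 ^ k := one_le_pow₀ (by norm_num)
  refine ⟨2 ^ k * M, by nlinarith, fun i hi w hw => ?_⟩
  have hr : (0:ℝ) < ‖w‖ := lt_of_lt_of_le (by norm_num) hw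
  set r : ℝ := ‖w‖ with hrdef
  have hw0 : w ≠ 0 := norm_ne_zero_iff.mp hr.ne'
  have hwV : w ∈ V := hw0
  set L : Eucl n →L[ℝ] Eucl n := r⁻¹ • ContinuousLinearMap.id ℝ (Eucl n) with hLdef
  have hLz : ∀ z : Eucl n, L z = r⁻¹ • z := fun z => rfl
  have hpre : L ⁻¹' V = V := by
    ext z
    simp only [hVdef, mem_preimage, mem_compl_iff, mem_singleton_iff, hLz,
      smul_eq_zero, inv_eq_zero, not_or]
    constructor
    · rintro ⟨-, h⟩; exact h
    · intro h; exact ⟨hr.ne', h⟩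
  have hLwnorm : ‖L w‖ = 1 := by
    rw [hLz, norm_smul, norm_inv, Real.norm_eq_abs, abs_of_pos hr, ← hrdef,
      inv_mul_cancel₀ hr.ne']
  have hLwV : L w ∈ V := by
    simp only [hVdef, mem_compl_iff, mem_singleton_iff]
    intro h
    rw [h] at hLwnorm; simp at hLwnorm
  have hcomp := ContinuousLinearMap.iteratedFDerivWithin_comp_right L
    (contDiffOn_F n (k : ℕ∞)) hV.uniqueDiffOn
    (by rw [hpre]; exact hV.uniqueDiffOn) hLwV (i := i) (by exact_mod_cast hi)
  have hfun : (F ∘ ⇑L) = (r ^ n) • F := by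
    funext z
    simp only [Function.comp_apply, hF, hLz, Pi.smul_apply, norm_smul, norm_inv,
      Real.norm_eq_abs, abs_of_pos hr, smul_eq_mul, mul_pow, mul_inv, inv_pow, inv_inv]
  have hsm : iteratedFDerivWithin ℝ i (F ∘ ⇑L) V w
      = (r ^ n) • iteratedFDerivWithin ℝ i F V w := by
    rw [hfun]
    exact iteratedFDerivWithin_const_smul_apply (by exact_mod_cast contDiffOn_F n (i : ℕ∞) w hwV)
      hV.uniqueDiffOn hwV
  rw [hpre, hsm] at hcomp
  have hnorm := congrArg norm hcomp
  rw [norm_smul, Real.norm_eq_abs, abs_of_pos (pow_pos hr n)] at hnorm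
  have hLle : ‖L‖ ≤ r⁻¹ := by
    refine L.opNorm_le_bound (inv_pos.mpr hr).le (fun z => ?_)
    rw [hLz, norm_smul, norm_inv, Real.norm_eq_abs, abs_of_pos hr]
  have hrinv : r⁻¹ ≤ 2 := by
    rw [inv_le_comm₀ hr (by norm_num)]; linarith
  have hRHS : ‖(iteratedFDerivWithin ℝ i F V (L w)).compContinuousLinearMap
      (fun _ => L)‖ ≤ M * 2 ^ k := by
    calc ‖(iteratedFDerivWithin ℝ i F V (L w)).compContinuousLinearMap (fun _ => L)‖
        ≤ ‖iteratedFDerivWithin ℝ i F V (L w)‖ * ∏ _j : Fin i, ‖L‖ :=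
          ContinuousMultilinearMap.norm_compContinuousLinearMap_le _ _
      _ ≤ M * 2 ^ k := by
          have h1 : ‖iteratedFDerivWithin ℝ i F V (L w)‖ ≤ M := by
            rw [iteratedFDerivWithin_of_isOpen i hV hLwV]
            exact hM i hi (L w) (mem_sphere_zero_iff_norm.mpr hLwnorm)
          have h2 : (∏ _j : Fin i, ‖L‖) ≤ 2 ^ k := by
            rw [Finset.prod_const, Finset.card_univ, Fintype.card_fin]
            calc ‖L‖ ^ i ≤ 2 ^ i := pow_le_pow_left₀ (norm_nonneg _)
                  (hLle.trans hrinv) i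
              _ ≤ 2 ^ k := pow_le_pow_right₀ (by norm_num) hi
          exact mul_le_mul h1 h2 (Finset.prod_nonneg fun _ _ => norm_nonneg _)
            (le_trans (norm_nonneg _) h1)
  have hkey : r ^ n * ‖iteratedFDerivWithin ℝ i F V w‖ ≤ M * 2 ^ k := by
    rw [hnorm]; exact hRHS
  rw [← iteratedFDerivWithin_of_isOpen i hV hwV]
  have hpow : (0:ℝ) < r ^ n := pow_pos hr n
  calc ‖iteratedFDerivWithin ℝ i F V w‖
      = (r ^ n)⁻¹ * (r ^ n * ‖iteratedFDerivWithin ℝ i F V w‖) := by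
        field_simp
    _ ≤ (r ^ n)⁻¹ * (M * 2 ^ k) := mul_le_mul_of_nonneg_left hkey (inv_pos.mpr hpow).le
    _ = 2 ^ k * M * (r ^ n)⁻¹ := by ring

lemma fderiv_comp_sub' {E G : Type*} [NormedAddCommGroup E] [NormedSpace ℝ E]
    [NormedAddCommGroup G] [NormedSpace ℝ G] (g : E → G) (a x : E) :
    fderiv ℝ (fun z => g (z - a)) x = fderiv ℝ g (x - a) := by
  by_cases h : DifferentiableAt ℝ g (x - a)
  · have h1 : HasFDerivAt (fun z : E => z - a) (ContinuousLinearMap.id ℝ E) x :=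
      (hasFDerivAt_id x).sub_const a
    have h2 : HasFDerivAt (fun z => g (z - a))
        ((fderiv ℝ g (x - a)).comp (ContinuousLinearMap.id ℝ E)) x :=
      h.hasFDerivAt.comp x h1
    rw [ContinuousLinearMap.comp_id] at h2
    exact h2.fderiv
  · rw [fderiv_zero_of_not_differentiableAt h,
      fderiv_zero_of_not_differentiableAt]
    intro hd
    have hd' : DifferentiableAt ℝ (fun z => g (z - a)) (x - a + a) := by
      rwa [sub_add_cancel]
    have : DifferentiableAt ℝ (fun w => g (w + a - a)) (x - a) :=
      (hd'.comp (x - a) (by fun_prop : DifferentiableAt ℝ (fun w : E => w + a) (x - a)) :)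
    simp only [add_sub_cancel_right] at this
    exact h this

lemma iteratedFDeriv_comp_sub_aux {E G : Type*} [NormedAddCommGroup E] [NormedSpace ℝ E]
    [NormedAddCommGroup G] [NormedSpace ℝ G] (g : E → G) (a : E) (i : ℕ) (x : E) :
    iteratedFDeriv ℝ i (fun z => g (z - a)) x = iteratedFDeriv ℝ i g (x - a) := by
  induction i generalizing x with
  | zero => ext m; simp
  | succ i ih =>
    ext m
    rw [iteratedFDeriv_succ_apply_left, iteratedFDeriv_succ_apply_left]
    have hfe : iteratedFDeriv ℝ i (fun z' => g (z' - a))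
        = fun z => iteratedFDeriv ℝ i g (z - a) := funext fun z => ih z
    rw [hfe, fderiv_comp_sub' (iteratedFDeriv ℝ i g) a x]

/-- Higher-order derivatives of the Poisson kernel are controlled by the kernel itself:
for each `k` there is `C_k > 0`, depending only on `n`, `s`, `k`, such that
`‖D_x^k P(x,y)‖ ≤ C_k · P(x,y)` for all `|x| < 1/2` and `|y| > 1`. -/
theorem poissonKernel_iterated_deriv_bound
    (n : ℕ) (hn : 3 ≤ n) (s : ℝ) (hs0 : 0 < s) (hs1 : s < 1) (k : ℕ) :
    ∃ C > 0, ∀ x y : Eucl n, ‖x‖ < 1 / 2 → 1 < ‖y‖ →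
      ContDiffAt ℝ (k : ℕ∞) (fun z : Eucl n => fracPoissonKernel n s z y) x ∧
      ‖iteratedFDeriv ℝ k (fun z : Eucl n => fracPoissonKernel n s z y) x‖ ≤
        C * fracPoissonKernel n s x y := by
  have hn0 : 0 < n := by omega
  obtain ⟨CF, hCF1, hCF⟩ := F_scaling_bound n hn0 k
  set g : Eucl n → ℝ := fun z => (1 - ‖z‖ ^ 2) ^ s with hgdef
  have hU : IsOpen (ball (0 : Eucl n) (3/4)) := isOpen_ball
  have hgU : ContDiffOn ℝ (k : ℕ∞) g (ball (0 : Eucl n) (3/4)) := by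
    apply ContDiffOn.rpow_const_of_ne
    · exact (contDiff_const.sub (contDiff_norm_sq ℝ)).contDiffOn
    · intro z hz
      have hz' : ‖z‖ < 3/4 := mem_ball_zero_iff.mp hz
      nlinarith [norm_nonneg z]
  obtain ⟨Cg, hCg1, hCg⟩ := exists_deriv_bound k hU hgU (isCompact_closedBall 0 (1/2))
    (closedBall_subset_ball (by norm_num))
  set q : ℝ := (3/4 : ℝ) ^ s with hqdef
  have hq : 0 < q := Real.rpow_pos_of_pos (by norm_num) s
  have hCg0 : (0:ℝ) < Cg := lt_of_lt_of_le one_pos hCg1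
  have hCF0 : (0:ℝ) < CF := lt_of_lt_of_le one_pos hCF1
  refine ⟨2 ^ k * Cg * CF * q⁻¹, by positivity, fun x y hx hy => ?_⟩
  -- basic positivity facts
  have hy2 : (1:ℝ) < ‖y‖ ^ 2 := by nlinarith
  have hB : (0:ℝ) < ‖y‖ ^ 2 - 1 := by linarith
  set c₀ : ℝ := Real.Gamma ((n : ℝ) / 2) * Real.sin (π * s) / π ^ ((n : ℝ) / 2 + 1)
    with hc₀def
  have hnR : (0:ℝ) < (n : ℝ) := by exact_mod_cast hn0
  have hc₀ : 0 < c₀ := by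
    apply div_pos (mul_pos (Real.Gamma_pos_of_pos (by linarith)) ?_)
      (Real.rpow_pos_of_pos Real.pi_pos _)
    exact Real.sin_pos_of_pos_of_lt_pi (by positivity)
      (mul_lt_of_lt_one_right Real.pi_pos hs1)
  set A : ℝ := c₀ * ((‖y‖ ^ 2 - 1) ^ s)⁻¹ with hAdef
  have hA : 0 < A := mul_pos hc₀ (inv_pos.mpr (Real.rpow_pos_of_pos hB s))
  set F : Eucl n → ℝ := fun w => (‖w‖ ^ n)⁻¹ with hFdef
  set hyf : Eucl n → ℝ := fun z => F (z - y) with hhydef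
  have hdist : ∀ z : Eucl n, ‖z‖ < 3/4 → (1/4 : ℝ) ≤ ‖z - y‖ := by
    intro z hz
    have h1 : ‖y‖ - ‖z‖ ≤ ‖z - y‖ := by
      calc ‖y‖ - ‖z‖ ≤ ‖y - z‖ := norm_sub_norm_le y z
        _ = ‖z - y‖ := norm_sub_rev y z
    linarith
  have hxy : (1/2 : ℝ) ≤ ‖x - y‖ := by
    have h1 : ‖y‖ - ‖x‖ ≤ ‖x - y‖ := by
      calc ‖y‖ - ‖x‖ ≤ ‖y - x‖ := norm_sub_norm_le y x
        _ = ‖x - y‖ := norm_sub_rev y x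
    linarith
  have hhyU : ContDiffOn ℝ (k : ℕ∞) hyf (ball (0 : Eucl n) (3/4)) := by
    intro z hz
    have hz34 := mem_ball_zero_iff.mp hz
    have hzy : z - y ≠ 0 := by
      intro h
      have h2 := hdist z hz34
      rw [h, norm_zero] at h2
      linarith
    have h1 : ContDiffAt ℝ (k : ℕ∞) (fun z : Eucl n => z - y) z :=
      (contDiff_id.sub contDiff_const).contDiffAt
    have h2 : ContDiffAt ℝ (k : ℕ∞) F (z - y) :=
      ((contDiffAt_norm (𝕜 := ℝ) hzy).pow n).inv
        (pow_ne_zero _ (norm_ne_zero_iff.mpr hzy))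
    exact (h2.comp z h1).contDiffWithinAt
  -- the key pointwise identity on the small ball
  have hEq : EqOn (fun z : Eucl n => fracPoissonKernel n s z y)
      (fun z : Eucl n => A * (g z * hyf z)) (ball (0 : Eucl n) (1/2)) := by
    intro z hz
    have hz12 := mem_ball_zero_iff.mp hz
    have hA0 : (0:ℝ) ≤ 1 - ‖z‖ ^ 2 := by nlinarith [norm_nonneg z]
    simp only [fracPoissonKernel, ← hc₀def, hAdef, hhydef, hFdef, hgdef]
    rw [dist_eq_norm, Real.div_rpow hA0 hB.le]
    ring
  have hxS : x ∈ ball (0 : Eucl n) (1/2) := mem_ball_zero_iff.mpr hx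
  have hS : IsOpen (ball (0 : Eucl n) (1/2)) := isOpen_ball
  have hSU : ball (0 : Eucl n) (1/2) ⊆ ball (0 : Eucl n) (3/4) :=
    ball_subset_ball (by norm_num)
  have hgS := hgU.mono hSU
  have hhyS := hhyU.mono hSU
  have hmulS : ContDiffOn ℝ (k : ℕ∞) (fun z => g z * hyf z)
      (ball (0 : Eucl n) (1/2)) := hgS.mul hhyS
  have hsmooth : ContDiffAt ℝ (k : ℕ∞) (fun z : Eucl n => fracPoissonKernel n s z y) x := by
    have h1 : ContDiffAt ℝ (k : ℕ∞) (fun z => A * (g z * hyf z)) x :=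
      contDiffAt_const.mul ((hmulS x hxS).contDiffAt (hS.mem_nhds hxS))
    exact h1.congr_of_eventuallyEq (Filter.eventuallyEq_of_mem (hS.mem_nhds hxS) hEq)
  refine ⟨hsmooth, ?_⟩
  -- bounds on the factors
  have hFxy : (0:ℝ) < F (x - y) := by
    have h0 : (0:ℝ) < ‖x - y‖ := lt_of_lt_of_le (by norm_num) hxy
    simp only [hFdef]
    positivity
  have hgbound : ∀ j ≤ k, ‖iteratedFDerivWithin ℝ j g (ball (0:Eucl n) (1/2)) x‖ ≤ Cg := by
    intro j hj
    rw [iteratedFDerivWithin_of_isOpen j hS hxS]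
    exact hCg j hj x (ball_subset_closedBall hxS)
  have hhybound : ∀ j ≤ k,
      ‖iteratedFDerivWithin ℝ j hyf (ball (0:Eucl n) (1/2)) x‖ ≤ CF * F (x - y) := by
    intro j hj
    rw [iteratedFDerivWithin_of_isOpen j hS hxS, hhydef,
      iteratedFDeriv_comp_sub_aux F y j x]
    exact hCF j hj (x - y) hxy
  -- product bound
  have hmulbound : ‖iteratedFDerivWithin ℝ k (fun z => g z * hyf z)
      (ball (0:Eucl n) (1/2)) x‖ ≤ 2 ^ k * Cg * (CF * F (x - y)) := by
    have hsum : ∑ i ∈ Finset.range (k+1), (k.choose i : ℝ) = 2 ^ k := by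
      rw [← Nat.cast_sum, Nat.sum_range_choose]
      push_cast
      ring
    calc ‖iteratedFDerivWithin ℝ k (fun z => g z * hyf z) (ball (0:Eucl n) (1/2)) x‖
        ≤ ∑ i ∈ Finset.range (k+1), (k.choose i : ℝ)
            * ‖iteratedFDerivWithin ℝ i g (ball (0:Eucl n) (1/2)) x‖
            * ‖iteratedFDerivWithin ℝ (k-i) hyf (ball (0:Eucl n) (1/2)) x‖ :=
          norm_iteratedFDerivWithin_mul_le hgS hhyS hS.uniqueDiffOn hxS le_rfl
      _ ≤ ∑ i ∈ Finset.range (k+1), (k.choose i : ℝ) * (Cg * (CF * F (x - y))) := by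
          refine Finset.sum_le_sum fun i hi => ?_
          have hik : i ≤ k := Nat.lt_succ_iff.mp (Finset.mem_range.mp hi)
          have h1 := hgbound i hik
          have h2 := hhybound (k - i) (Nat.sub_le k i)
          have hch : (0:ℝ) ≤ (k.choose i : ℝ) := Nat.cast_nonneg _
          calc (k.choose i : ℝ)
                * ‖iteratedFDerivWithin ℝ i g (ball (0:Eucl n) (1/2)) x‖
                * ‖iteratedFDerivWithin ℝ (k-i) hyf (ball (0:Eucl n) (1/2)) x‖
              ≤ (k.choose i : ℝ) * Cg
                * ‖iteratedFDerivWithin ℝ (k-i) hyf (ball (0:Eucl n) (1/2)) x‖ :=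
                mul_le_mul_of_nonneg_right (mul_le_mul_of_nonneg_left h1 hch)
                  (norm_nonneg _)
            _ ≤ (k.choose i : ℝ) * Cg * (CF * F (x - y)) :=
                mul_le_mul_of_nonneg_left h2 (mul_nonneg hch hCg0.le)
            _ = (k.choose i : ℝ) * (Cg * (CF * F (x - y))) := by ring
      _ = 2 ^ k * Cg * (CF * F (x - y)) := by
          rw [← Finset.sum_mul, hsum]
          ring
  -- compute the derivative of the kernel
  have e0 : iteratedFDeriv ℝ k (fun z : Eucl n => fracPoissonKernel n s z y) x
      = iteratedFDerivWithin ℝ k (fun z : Eucl n => fracPoissonKernel n s z y)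
        (ball (0:Eucl n) (1/2)) x :=
    (iteratedFDerivWithin_of_isOpen k hS hxS).symm
  have e1 : iteratedFDerivWithin ℝ k (fun z : Eucl n => fracPoissonKernel n s z y)
      (ball (0:Eucl n) (1/2)) x
      = iteratedFDerivWithin ℝ k (A • fun z => g z * hyf z) (ball (0:Eucl n) (1/2)) x :=
    iteratedFDerivWithin_congr hEq hxS k
  have e2 : iteratedFDerivWithin ℝ k (A • fun z => g z * hyf z)
      (ball (0:Eucl n) (1/2)) x
      = A • iteratedFDerivWithin ℝ k (fun z => g z * hyf z) (ball (0:Eucl n) (1/2)) x :=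
    iteratedFDerivWithin_const_smul_apply (by exact_mod_cast hmulS x hxS)
      hS.uniqueDiffOn hxS
  have hnorm : ‖iteratedFDeriv ℝ k (fun z : Eucl n => fracPoissonKernel n s z y) x‖
      = A * ‖iteratedFDerivWithin ℝ k (fun z => g z * hyf z)
          (ball (0:Eucl n) (1/2)) x‖ := by
    rw [e0, e1, e2, norm_smul, Real.norm_eq_abs, abs_of_pos hA]
  -- lower bound for g
  have hglow : q ≤ g x := by
    simp only [hgdef, hqdef]
    apply Real.rpow_le_rpow (by norm_num) _ hs0.le
    nlinarith [norm_nonneg x]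
  have hPxy : fracPoissonKernel n s x y = A * (g x * F (x - y)) := hEq hxS
  rw [hnorm, hPxy]
  have hkey : F (x - y) ≤ q⁻¹ * (g x * F (x - y)) := by
    rw [inv_mul_eq_div, le_div_iff₀ hq]
    nlinarith
  calc A * ‖iteratedFDerivWithin ℝ k (fun z => g z * hyf z) (ball (0:Eucl n) (1/2)) x‖
      ≤ A * (2 ^ k * Cg * (CF * F (x - y))) :=
        mul_le_mul_of_nonneg_left hmulbound hA.le
    _ = (2 ^ k * Cg * CF) * (A * F (x - y)) := by ring
    _ ≤ (2 ^ k * Cg * CF) * (A * (q⁻¹ * (g x * F (x - y)))) := by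
        refine mul_le_mul_of_nonneg_left (mul_le_mul_of_nonneg_left hkey hA.le) ?_
        positivity
    _ = 2 ^ k * Cg * CF * q⁻¹ * (A * (g x * F (x - y))) := by ring
end
end

section
/- Let n ≥ 3, 0 < s < 1/2, and let f : ℝⁿ → ℝ be measurable with ‖f‖_{L^∞(B_1(0))} < ∞, and let w be the potential of f in B_1(0). Then there exists a constant C > 0 depending only on n and s such that for all x, x̄ ∈ B_{1/2}(0), |w(x) − w(x̄)| ≤ C |x − x̄|^{2s} ‖f‖_{L^∞(B_1(0))}. -/
open MeasureTheory Metric Set Filter Topology Real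

noncomputable section

/-- The potential of `f` in `B_1(0)`: `w(x) = ∫_{B_1(0)} |x-y|^{2s-n} f(y) dy`. -/
def fracPotential (n : ℕ) (s : ℝ) (f : Eucl n → ℝ) (x : Eucl n) : ℝ :=
  ∫ y in ball (0 : Eucl n) 1, dist x y ^ (2 * s - (n : ℝ)) * f y

open Measure
open scoped ENNReal NNReal

def Vc (n : ℕ) : ℝ≥0∞ := (n : ℝ≥0∞) * volume (ball (0 : Eucl n) 1)

lemma lintegral_radial (n : ℕ) (hn : 0 < n) (g : ℝ → ℝ≥0∞) (hg : Measurable g) :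
    ∫⁻ x : Eucl n, g ‖x‖ = Vc n * ∫⁻ t in Ioi (0:ℝ), ENNReal.ofReal (t ^ (n - 1)) * g t := by
  have : Nontrivial (Eucl n) := by
    have : NeZero n := ⟨by omega⟩
    infer_instance
  have hdim : Module.finrank ℝ (Eucl n) = n := finrank_euclideanSpace_fin
  calc ∫⁻ x : Eucl n, g ‖x‖
      = ∫⁻ x : ({(0:Eucl n)}ᶜ : Set (Eucl n)), g ‖x.1‖ ∂((volume : Measure (Eucl n)).comap (↑)) := by
        rw [lintegral_subtype_comap (measurableSet_singleton (0:Eucl n)).compl fun x => g ‖x‖,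
          restrict_compl_singleton]
    _ = ∫⁻ p : sphere (0:Eucl n) 1 × Ioi (0:ℝ), g p.2
          ∂((volume : Measure (Eucl n)).toSphere.prod
            (.volumeIoiPow (Module.finrank ℝ (Eucl n) - 1))) := by
        have := (Measure.measurePreserving_homeomorphUnitSphereProd
          (volume : Measure (Eucl n))).lintegral_comp
          ((hg.comp measurable_subtype_coe).comp measurable_snd)
        simpa only [Function.comp_def, homeomorphUnitSphereProd_apply_snd_coe] using this
    _ = (volume : Measure (Eucl n)).toSphere univ
          * ∫⁻ t : Ioi (0:ℝ), g t ∂(Measure.volumeIoiPow (Module.finrank ℝ (Eucl n) - 1)) := by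
        rw [lintegral_prod (fun p : sphere (0:Eucl n) 1 × Ioi (0:ℝ) => g p.2)
          (((hg.comp measurable_subtype_coe).comp measurable_snd).aemeasurable :
            AEMeasurable (fun p : sphere (0:Eucl n) 1 × Ioi (0:ℝ) => g p.2) _)]
        simp [lintegral_const, mul_comm]
    _ = Vc n * ∫⁻ t in Ioi (0:ℝ), ENNReal.ofReal (t ^ (n - 1)) * g t := by
        rw [Measure.toSphere_apply_univ, Measure.volumeIoiPow,
          lintegral_withDensity_eq_lintegral_mul _
            (by exact ((measurable_subtype_coe.pow_const _).ennreal_ofReal))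
            (show Measurable fun t : Ioi (0:ℝ) => g ↑t from hg.comp measurable_subtype_coe)]
        simp only [Pi.mul_apply]
        rw [lintegral_subtype_comap measurableSet_Ioi
            (fun t => ENNReal.ofReal (t ^ (Module.finrank ℝ (Eucl n) - 1)) * g t), hdim]
        rfl

lemma lintegral_dist_eq (n : ℕ) (z : Eucl n) (g : ℝ → ℝ≥0∞) :
    ∫⁻ y : Eucl n, g (dist z y) = ∫⁻ y : Eucl n, g ‖y‖ := by
  have h := (measurePreserving_add_right (volume : Measure (Eucl n)) z).lintegral_comp_emb
    (MeasurableEquiv.addRight z).measurableEmbedding (fun y => g ‖y - z‖)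
  simp only [add_sub_cancel_right] at h
  calc ∫⁻ y : Eucl n, g (dist z y) = ∫⁻ y : Eucl n, g ‖y - z‖ := by
        apply lintegral_congr; intro y; rw [dist_eq_norm, norm_sub_rev]
    _ = ∫⁻ y : Eucl n, g ‖y‖ := h.symm

lemma lintegral_annulus (n : ℕ) (hn : 0 < n) (z : Eucl n) (r R p : ℝ) :
    ∫⁻ y in {y : Eucl n | r ≤ dist z y} ∩ ball z R, ENNReal.ofReal (dist z y ^ p)
      = Vc n * ∫⁻ t in Ico r R ∩ Ioi (0:ℝ), ENNReal.ofReal (t ^ ((n:ℝ) - 1 + p)) := by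
  set g : ℝ → ℝ≥0∞ := (Ico r R).indicator (fun t => ENNReal.ofReal (t ^ p)) with hgdef
  have hg : Measurable g := by
    apply Measurable.indicator _ measurableSet_Ico
    exact (measurable_id.pow_const p).ennreal_ofReal
  have hA : MeasurableSet ({y : Eucl n | r ≤ dist z y} ∩ ball z R) :=
    ((isClosed_le continuous_const (continuous_const.dist continuous_id)).measurableSet).inter
      measurableSet_ball
  have key : ∀ y : Eucl n,
      ({y : Eucl n | r ≤ dist z y} ∩ ball z R).indicator
        (fun y => ENNReal.ofReal (dist z y ^ p)) y = g (dist z y) := by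
    intro y
    by_cases hy : y ∈ {y : Eucl n | r ≤ dist z y} ∩ ball z R
    · rw [indicator_of_mem hy, hgdef, indicator_of_mem]
      exact ⟨hy.1, by simpa [dist_comm] using hy.2⟩
    · rw [indicator_of_notMem hy, hgdef, indicator_of_notMem]
      intro hmem
      exact hy ⟨hmem.1, by simpa [dist_comm] using hmem.2⟩
  calc ∫⁻ y in {y : Eucl n | r ≤ dist z y} ∩ ball z R, ENNReal.ofReal (dist z y ^ p)
      = ∫⁻ y : Eucl n, g (dist z y) := by
        rw [← lintegral_indicator hA]
        exact lintegral_congr key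
    _ = ∫⁻ y : Eucl n, g ‖y‖ := lintegral_dist_eq n z g
    _ = Vc n * ∫⁻ t in Ioi (0:ℝ), ENNReal.ofReal (t ^ (n - 1)) * g t :=
        lintegral_radial n hn g hg
    _ = Vc n * ∫⁻ t in Ico r R ∩ Ioi (0:ℝ), ENNReal.ofReal (t ^ ((n:ℝ) - 1 + p)) := by
        congr 1
        have : ∀ t : ℝ, ENNReal.ofReal (t ^ (n - 1)) * g t
            = (Ico r R).indicator (fun t => ENNReal.ofReal (t ^ (n - 1)) *
                ENNReal.ofReal (t ^ p)) t := by
          intro t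
          by_cases ht : t ∈ Ico r R
          · rw [hgdef, indicator_of_mem ht, indicator_of_mem ht]
          · rw [hgdef, indicator_of_notMem ht, indicator_of_notMem ht, mul_zero]
        rw [lintegral_congr this, lintegral_indicator measurableSet_Ico,
          Measure.restrict_restrict measurableSet_Ico]
        apply setLIntegral_congr_fun (measurableSet_Ico.inter measurableSet_Ioi)
        intro t ht
        have ht0 : 0 < t := ht.2
        beta_reduce
        rw [← ENNReal.ofReal_mul (by positivity)]
        congr 1
        rw [← Real.rpow_natCast t (n-1), Nat.cast_sub hn, Nat.cast_one,
          ← Real.rpow_add ht0]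


lemma lint_Ioo (R p : ℝ) (hR : 0 < R) (hp : -1 < p) :
    ∫⁻ t in Ioo (0:ℝ) R, ENNReal.ofReal (t ^ p) = ENNReal.ofReal (R ^ (p+1) / (p+1)) := by
  rw [← ofReal_integral_eq_lintegral_ofReal]
  · congr 1
    rw [← integral_Ioc_eq_integral_Ioo, ← intervalIntegral.integral_of_le hR.le,
      integral_rpow (Or.inl hp), Real.zero_rpow (by linarith), sub_zero]
  · exact ((intervalIntegral.intervalIntegrable_rpow' hp).1).mono_set Ioo_subset_Ioc_self
  · filter_upwards [ae_restrict_mem measurableSet_Ioo] with t ht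
    exact Real.rpow_nonneg ht.1.le p

lemma lint_Ico (r p : ℝ) (hr : 0 < r) (hr2 : r ≤ 2) (hp : p < -1) :
    ∫⁻ t in Ico r 2, ENNReal.ofReal (t ^ p) ≤ ENNReal.ofReal (r ^ (p+1) / (-(p+1))) := by
  have hint : IntegrableOn (fun t : ℝ => t ^ p) (Ioc r 2) volume :=
    ((intervalIntegral.intervalIntegrable_rpow
      (Or.inr (notMem_uIcc_of_lt hr zero_lt_two))).1)
  rw [Measure.restrict_congr_set Ico_ae_eq_Ioc, ← ofReal_integral_eq_lintegral_ofReal hint]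
  · apply ENNReal.ofReal_le_ofReal
    rw [← intervalIntegral.integral_of_le hr2,
      integral_rpow (Or.inr ⟨by linarith, notMem_uIcc_of_lt hr zero_lt_two⟩)]
    have h2 : (0:ℝ) < 2 ^ (p+1) := Real.rpow_pos_of_pos two_pos _
    have hq : (0:ℝ) < -(p+1) := by linarith
    calc (2 ^ (p+1) - r ^ (p+1))/(p+1) = (r ^ (p+1) - 2 ^ (p+1))/(-(p+1)) := by
          rw [div_eq_div_iff (by linarith) (by linarith)]; ring
        _ ≤ r ^ (p+1) / (-(p+1)) := by gcongr; linarith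
  · filter_upwards [ae_restrict_mem measurableSet_Ioc] with t ht
    exact Real.rpow_nonneg (by linarith [ht.1, hr]) p

lemma abs_rpow_sub_rpow_le {a c t t' : ℝ} (ha : a < 0) (hc : 0 < c) (ht : c ≤ t) (ht' : c ≤ t') :
    |t ^ a - t' ^ a| ≤ (-a) * c ^ (a - 1) * |t - t'| := by
  have hderiv : ∀ x ∈ Ici c, HasDerivWithinAt (fun u : ℝ => u ^ a) (a * x ^ (a - 1)) (Ici c) x :=
    fun x hx => (Real.hasDerivAt_rpow_const
      (Or.inl (ne_of_gt (hc.trans_le hx)))).hasDerivWithinAt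
  have hbound : ∀ x ∈ Ici c, ‖a * x ^ (a - 1)‖ ≤ (-a) * c ^ (a - 1) := by
    intro x hx
    have hx0 : 0 < x := hc.trans_le hx
    rw [Real.norm_eq_abs, abs_mul, abs_of_neg ha, abs_of_pos (Real.rpow_pos_of_pos hx0 _)]
    have : x ^ (a - 1) ≤ c ^ (a - 1) :=
      Real.rpow_le_rpow_of_nonpos hc hx (by linarith)
    nlinarith
  have key := (convex_Ici c).norm_image_sub_le_of_norm_hasDerivWithin_le hderiv hbound ht' ht
  simpa [Real.norm_eq_abs] using key

lemma near_bound (n : ℕ) (hn : 0 < n) (s : ℝ) (hs0 : 0 < s) (z : Eucl n) (ρ : ℝ) (hρ : 0 < ρ) :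
    ∫⁻ y in ball z ρ, ENNReal.ofReal (dist z y ^ (2*s - n))
      = Vc n * ENNReal.ofReal (ρ ^ (2*s) / (2*s)) := by
  have hset : ball z ρ = {y : Eucl n | (0:ℝ) ≤ dist z y} ∩ ball z ρ := by
    ext y; simp [dist_nonneg]
  rw [hset, lintegral_annulus n hn z 0 ρ (2*s - n)]
  have h1 : Ico (0:ℝ) ρ ∩ Ioi (0:ℝ) = Ioo 0 ρ := by
    ext t
    constructor
    · rintro ⟨⟨-, h2⟩, h3⟩; exact ⟨h3, h2⟩
    · rintro ⟨h1, h2⟩; exact ⟨⟨h1.le, h2⟩, h1⟩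
  have h2 : (n:ℝ) - 1 + (2*s - n) = 2*s - 1 := by ring
  rw [h1, h2, lint_Ioo ρ (2*s-1) hρ (by linarith), show 2*s - 1 + 1 = 2*s by ring]

lemma far_bound (n : ℕ) (hn : 0 < n) (s : ℝ) (hs0 : 0 < s) (hs1 : s < 1/2) (z : Eucl n)
    (r : ℝ) (hr0 : 0 < r) (hr2 : r ≤ 2) :
    ∫⁻ y in {y : Eucl n | r ≤ dist z y} ∩ ball z 2, ENNReal.ofReal (dist z y ^ (2*s - n - 1))
      ≤ Vc n * ENNReal.ofReal (r ^ (2*s - 1) / (1 - 2*s)) := by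
  rw [lintegral_annulus n hn z r 2 (2*s - n - 1)]
  have h1 : Ico r 2 ∩ Ioi (0:ℝ) = Ico r 2 :=
    inter_eq_left.2 (fun t ht => lt_of_lt_of_le hr0 ht.1)
  have h2 : (n:ℝ) - 1 + (2*s - n - 1) = 2*s - 2 := by ring
  rw [h1, h2]
  apply mul_le_mul_right
  have := lint_Ico r (2*s-2) hr0 hr2 (by linarith)
  rw [show 2*s - 2 + 1 = 2*s - 1 by ring, show -(2*s - 1) = 1 - 2*s by ring] at this
  exact this

/-- Hölder continuity of exponent `2s` of the potential of a bounded `f`, for `0 < s < 1/2`,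
with constant depending only on `n` and `s`. -/
theorem potential_holder_estimate_small_s
    (n : ℕ) (hn : 3 ≤ n) (s : ℝ) (hs0 : 0 < s) (hs1 : s < 1 / 2) :
    ∃ C > 0, ∀ f : Eucl n → ℝ, Measurable f →
      BddAbove ((fun x => |f x|) '' ball (0 : Eucl n) 1) →
      ∀ x ∈ ball (0 : Eucl n) (1 / 2), ∀ x' ∈ ball (0 : Eucl n) (1 / 2),
        |fracPotential n s f x - fracPotential n s f x'| ≤
          C * dist x x' ^ (2 * s) * supAbsOn (ball (0 : Eucl n) 1) f := by
  have hn0 : 0 < n := by omega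
  have hn3 : (3:ℝ) ≤ n := by exact_mod_cast hn
  have h2s : (0:ℝ) < 2*s := by linarith
  have h12 : (0:ℝ) < 1 - 2*s := by linarith
  have hna : (0:ℝ) < (n:ℝ) - 2*s := by linarith
  set a : ℝ := 2*s - n with ha
  have hVtop : Vc n ≠ ⊤ :=
    ENNReal.mul_ne_top (ENNReal.natCast_ne_top n) measure_ball_lt_top.ne
  have hVne : Vc n ≠ 0 :=
    mul_ne_zero (by exact_mod_cast Nat.cast_ne_zero.2 (by omega)) (measure_ball_pos _ _ one_pos).ne'
  set Vr : ℝ := (Vc n).toReal with hVrdef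
  have hVpos : 0 < Vr := ENNReal.toReal_pos hVne hVtop
  have hVc : Vc n = ENNReal.ofReal Vr := (ENNReal.ofReal_toReal hVtop).symm
  set C : ℝ := Vr * (2:ℝ)^(2*s)/(2*s) + Vr * (3:ℝ)^(2*s)/(2*s)
      + ((n:ℝ) - 2*s) * (2:ℝ)^(1-a) * (2:ℝ)^(2*s-1) * Vr / (1-2*s) with hC
  have hCpos : 0 < C := by
    have p1 : (0:ℝ) < Vr * (2:ℝ)^(2*s)/(2*s) :=
      div_pos (mul_pos hVpos (Real.rpow_pos_of_pos two_pos _)) h2s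
    have p2 : (0:ℝ) < Vr * (3:ℝ)^(2*s)/(2*s) :=
      div_pos (mul_pos hVpos (Real.rpow_pos_of_pos three_pos _)) h2s
    have p3 : (0:ℝ) < ((n:ℝ) - 2*s) * (2:ℝ)^(1-a) * (2:ℝ)^(2*s-1) * Vr / (1-2*s) :=
      div_pos (mul_pos (mul_pos (mul_pos hna (Real.rpow_pos_of_pos two_pos _))
        (Real.rpow_pos_of_pos two_pos _)) hVpos) h12
    rw [hC]; linarith
  refine ⟨C, hCpos, ?_⟩
  intro f hf hbdd x hx x' hx'
  set M := supAbsOn (ball (0:Eucl n) 1) f with hM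
  have hfM : ∀ y ∈ ball (0:Eucl n) 1, |f y| ≤ M := fun y hy =>
    le_csSup hbdd ⟨y, hy, rfl⟩
  have hM0 : 0 ≤ M :=
    le_trans (abs_nonneg (f 0)) (hfM 0 (mem_ball_self one_pos))
  set d := dist x x' with hd
  rcases eq_or_ne x x' with rfl | hxx
  · rw [_root_.sub_self, abs_zero, hd, dist_self, Real.zero_rpow (ne_of_gt h2s), mul_zero, zero_mul]
  have hd0 : 0 < d := dist_pos.2 hxx
  have hx0 : dist x 0 < 1/2 := mem_ball.1 hx
  have hx'0 : dist x' 0 < 1/2 := mem_ball.1 hx'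
  have hd1 : d < 1 := by
    have := dist_triangle_right x x' 0
    rw [← hd] at this; linarith
  -- kernel measurability
  have kmeas : ∀ z : Eucl n, Measurable fun y : Eucl n => dist z y ^ a :=
    fun z => (measurable_const.dist measurable_id).pow_const a
  -- ball 0 1 ⊆ ball z 2 for z in half ball
  have hsub2 : ∀ z : Eucl n, dist z 0 < 1/2 → ball (0:Eucl n) 1 ⊆ ball z 2 := by
    intro z hz y hy
    have hy1 : dist y 0 < 1 := mem_ball.1 hy
    have := dist_triangle y 0 z
    rw [mem_ball]
    rw [dist_comm 0 z] at this
    linarith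
  -- integrability of kernel * f on the unit ball
  have kfint : ∀ z : Eucl n, dist z 0 < 1/2 →
      IntegrableOn (fun y => dist z y ^ a * f y) (ball (0:Eucl n) 1) volume := by
    intro z hz
    refine ⟨((kmeas z).mul hf).aestronglyMeasurable.restrict, ?_⟩
    rw [hasFiniteIntegral_iff_norm]
    calc ∫⁻ y in ball (0:Eucl n) 1, ENNReal.ofReal ‖dist z y ^ a * f y‖
        ≤ ∫⁻ y in ball (0:Eucl n) 1, ENNReal.ofReal M * ENNReal.ofReal (dist z y ^ a) := by
          apply setLIntegral_mono (measurable_const.mul ((kmeas z).ennreal_ofReal))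
          intro y hy
          simp only [Pi.mul_apply]
          rw [← ENNReal.ofReal_mul hM0]
          apply ENNReal.ofReal_le_ofReal
          rw [Real.norm_eq_abs, abs_mul, abs_of_nonneg (Real.rpow_nonneg dist_nonneg a)]
          have := hfM y hy
          have hk : (0:ℝ) ≤ dist z y ^ a := Real.rpow_nonneg dist_nonneg a
          nlinarith [abs_nonneg (f y)]
      _ = ENNReal.ofReal M * ∫⁻ y in ball (0:Eucl n) 1, ENNReal.ofReal (dist z y ^ a) :=
          lintegral_const_mul' _ _ ENNReal.ofReal_ne_top
      _ ≤ ENNReal.ofReal M * ∫⁻ y in ball z 2, ENNReal.ofReal (dist z y ^ a) := by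
          gcongr
          exact hsub2 z hz
      _ = ENNReal.ofReal M * (Vc n * ENNReal.ofReal ((2:ℝ) ^ (2*s) / (2*s))) := by
          rw [ha, near_bound n hn0 s hs0 z 2 two_pos]
      _ < ⊤ := by
          apply ENNReal.mul_lt_top ENNReal.ofReal_lt_top
          exact ENNReal.mul_lt_top hVtop.lt_top ENNReal.ofReal_lt_top
  -- the difference formula
  have hdiff : fracPotential n s f x - fracPotential n s f x'
      = ∫ y in ball (0:Eucl n) 1, (dist x y ^ a - dist x' y ^ a) * f y := by
    rw [fracPotential, fracPotential, ← integral_sub (kfint x hx0) (kfint x' hx'0)]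
    congr 1
    funext y
    rw [ha]; ring
  rw [hdiff, ← Real.norm_eq_abs]
  refine le_trans (norm_integral_le_lintegral_norm _) ?_
  apply ENNReal.toReal_le_of_le_ofReal (by positivity)
  -- main lintegral estimate
  set T := ball x (2*d) with hT
  set A := {y : Eucl n | 2*d ≤ dist x y} ∩ ball x 2 with hA
  have habs_meas : Measurable fun y : Eucl n => |dist x y ^ a - dist x' y ^ a| :=
    ((kmeas x).sub (kmeas x')).abs
  calc ∫⁻ y in ball (0:Eucl n) 1, ENNReal.ofReal ‖(dist x y ^ a - dist x' y ^ a) * f y‖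
      ≤ ∫⁻ y in ball (0:Eucl n) 1,
          ENNReal.ofReal (|dist x y ^ a - dist x' y ^ a|) * ENNReal.ofReal M := by
        apply setLIntegral_mono (habs_meas.ennreal_ofReal.mul_const _)
        intro y hy
        rw [← ENNReal.ofReal_mul (abs_nonneg _)]
        apply ENNReal.ofReal_le_ofReal
        rw [Real.norm_eq_abs, abs_mul]
        exact mul_le_mul_of_nonneg_left (hfM y hy) (abs_nonneg _)
    _ = (∫⁻ y in ball (0:Eucl n) 1, ENNReal.ofReal (|dist x y ^ a - dist x' y ^ a|))
          * ENNReal.ofReal M := lintegral_mul_const' _ _ ENNReal.ofReal_ne_top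
    _ ≤ ((Vc n * ENNReal.ofReal ((2*d) ^ (2*s) / (2*s))
          + Vc n * ENNReal.ofReal ((3*d) ^ (2*s) / (2*s)))
          + ENNReal.ofReal (((n:ℝ) - 2*s) * (2:ℝ)^(1-a) * d)
            * (Vc n * ENNReal.ofReal ((2*d) ^ (2*s-1) / (1 - 2*s)))) * ENNReal.ofReal M := by
        gcongr
        rw [← lintegral_inter_add_diff _ (ball (0:Eucl n) 1) measurableSet_ball (B := T)]
        gcongr
        -- near part
        · calc ∫⁻ y in ball (0:Eucl n) 1 ∩ T, ENNReal.ofReal (|dist x y ^ a - dist x' y ^ a|)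
              ≤ ∫⁻ y in ball (0:Eucl n) 1 ∩ T,
                  (ENNReal.ofReal (dist x y ^ a) + ENNReal.ofReal (dist x' y ^ a)) := by
                apply setLIntegral_mono
                  (((kmeas x).ennreal_ofReal).add ((kmeas x').ennreal_ofReal))
                intro y _
                simp only [Pi.add_apply]
                rw [← ENNReal.ofReal_add (Real.rpow_nonneg dist_nonneg a)
                  (Real.rpow_nonneg dist_nonneg a)]
                apply ENNReal.ofReal_le_ofReal
                calc |dist x y ^ a - dist x' y ^ a|
                    ≤ |dist x y ^ a| + |dist x' y ^ a| := abs_sub _ _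
                  _ = dist x y ^ a + dist x' y ^ a := by
                      rw [abs_of_nonneg (Real.rpow_nonneg dist_nonneg a),
                        abs_of_nonneg (Real.rpow_nonneg dist_nonneg a)]
            _ = (∫⁻ y in ball (0:Eucl n) 1 ∩ T, ENNReal.ofReal (dist x y ^ a))
                  + ∫⁻ y in ball (0:Eucl n) 1 ∩ T, ENNReal.ofReal (dist x' y ^ a) :=
                lintegral_add_left ((kmeas x).ennreal_ofReal) _
            _ ≤ Vc n * ENNReal.ofReal ((2*d) ^ (2*s) / (2*s))
                  + Vc n * ENNReal.ofReal ((3*d) ^ (2*s) / (2*s)) := by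
                gcongr
                · calc ∫⁻ y in ball (0:Eucl n) 1 ∩ T, ENNReal.ofReal (dist x y ^ a)
                      ≤ ∫⁻ y in T, ENNReal.ofReal (dist x y ^ a) :=
                        lintegral_mono_set inter_subset_right
                    _ = Vc n * ENNReal.ofReal ((2*d) ^ (2*s) / (2*s)) := by
                        rw [ha, hT, near_bound n hn0 s hs0 x (2*d) (by linarith)]
                · calc ∫⁻ y in ball (0:Eucl n) 1 ∩ T, ENNReal.ofReal (dist x' y ^ a)
                      ≤ ∫⁻ y in ball x' (3*d), ENNReal.ofReal (dist x' y ^ a) := by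
                        apply lintegral_mono_set
                        intro y hy
                        have h1 : dist y x < 2*d := mem_ball.1 hy.2
                        have := dist_triangle y x x'
                        rw [mem_ball, hd] at *
                        linarith
                    _ = Vc n * ENNReal.ofReal ((3*d) ^ (2*s) / (2*s)) := by
                        rw [ha, near_bound n hn0 s hs0 x' (3*d) (by linarith)]
        -- far part
        · calc ∫⁻ y in ball (0:Eucl n) 1 \ T, ENNReal.ofReal (|dist x y ^ a - dist x' y ^ a|)
              ≤ ∫⁻ y in ball (0:Eucl n) 1 \ T,
                  ENNReal.ofReal (((n:ℝ) - 2*s) * (2:ℝ)^(1-a) * d)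
                    * ENNReal.ofReal (dist x y ^ (a-1)) := by
                apply setLIntegral_mono
                  (measurable_const.mul ((measurable_const.dist measurable_id).pow_const _).ennreal_ofReal)
                intro y hy
                have hyx : 2*d ≤ dist x y := by
                  have := hy.2
                  rw [hT, mem_ball, dist_comm] at this
                  exact not_lt.1 this
                have hc0 : 0 < dist x y / 2 := by linarith
                have hcx : dist x y / 2 ≤ dist x y := by linarith
                have hcx' : dist x y / 2 ≤ dist x' y := by
                  have := dist_triangle x x' y
                  rw [← hd] at this
                  linarith [dist_triangle x x' y]
                have key := abs_rpow_sub_rpow_le (show a < 0 by rw [ha]; linarith)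
                  hc0 hcx hcx'
                have habs : |dist x y - dist x' y| ≤ d := by
                  rw [hd]; exact abs_dist_sub_le x x' y
                simp only [Pi.mul_apply, id]
                rw [← ENNReal.ofReal_mul (by positivity)]
                apply ENNReal.ofReal_le_ofReal
                have hhalf : (dist x y / 2) ^ (a-1) = dist x y ^ (a-1) * (2:ℝ)^(1-a) := by
                  have h2 : (2:ℝ)^(1-a) = ((2:ℝ)^(a-1))⁻¹ := by
                    rw [show (1-a) = -(a-1) by ring, Real.rpow_neg (by norm_num)]
                  rw [Real.div_rpow dist_nonneg (by norm_num : (0:ℝ) ≤ 2), h2, div_eq_mul_inv]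
                calc |dist x y ^ a - dist x' y ^ a|
                    ≤ (-a) * (dist x y / 2) ^ (a-1) * |dist x y - dist x' y| := key
                  _ ≤ (-a) * (dist x y / 2) ^ (a-1) * d := by
                      apply mul_le_mul_of_nonneg_left habs
                      apply mul_nonneg (by rw [ha]; linarith)
                        (Real.rpow_nonneg (by positivity) _)
                  _ = ((n:ℝ) - 2*s) * (2:ℝ)^(1-a) * d * dist x y ^ (a-1) := by
                      rw [hhalf, ha]; ring
            _ = ENNReal.ofReal (((n:ℝ) - 2*s) * (2:ℝ)^(1-a) * d)
                  * ∫⁻ y in ball (0:Eucl n) 1 \ T, ENNReal.ofReal (dist x y ^ (a-1)) :=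
                lintegral_const_mul' _ _ ENNReal.ofReal_ne_top
            _ ≤ ENNReal.ofReal (((n:ℝ) - 2*s) * (2:ℝ)^(1-a) * d)
                  * (Vc n * ENNReal.ofReal ((2*d) ^ (2*s-1) / (1 - 2*s))) := by
                gcongr
                calc ∫⁻ y in ball (0:Eucl n) 1 \ T, ENNReal.ofReal (dist x y ^ (a-1))
                    ≤ ∫⁻ y in A, ENNReal.ofReal (dist x y ^ (a-1)) := by
                      apply lintegral_mono_set
                      intro y hy
                      have hy1 : dist y 0 < 1 := mem_ball.1 hy.1
                      have hyT : 2*d ≤ dist x y := by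
                        have := hy.2
                        rw [hT, mem_ball, dist_comm] at this
                        exact not_lt.1 this
                      refine ⟨hyT, ?_⟩
                      rw [mem_ball]
                      have := dist_triangle y 0 x
                      rw [dist_comm 0 x] at this
                      have hcomm : dist x y = dist y x := dist_comm x y
                      linarith
                  _ ≤ Vc n * ENNReal.ofReal ((2*d) ^ (2*s-1) / (1 - 2*s)) := by
                      rw [hA, show a - 1 = 2*s - (n:ℝ) - 1 from by rw [ha]]
                      exact far_bound n hn0 s hs0 hs1 x (2*d) (by linarith) (by linarith)
    _ ≤ ENNReal.ofReal (C * d ^ (2*s) * M) := by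
        rw [hVc, ← ENNReal.ofReal_mul hVpos.le, ← ENNReal.ofReal_mul hVpos.le,
          ← ENNReal.ofReal_add (by positivity) (by positivity),
          ← ENNReal.ofReal_mul hVpos.le,
          ← ENNReal.ofReal_mul (by positivity),
          ← ENNReal.ofReal_add (by positivity) (by positivity),
          ← ENNReal.ofReal_mul (by positivity)]
        apply ENNReal.ofReal_le_ofReal
        have e1 : (2*d) ^ (2*s) = (2:ℝ)^(2*s) * d^(2*s) := Real.mul_rpow (by norm_num) hd0.le
        have e2 : (3*d) ^ (2*s) = (3:ℝ)^(2*s) * d^(2*s) := Real.mul_rpow (by norm_num) hd0.le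
        have e3 : (2*d) ^ (2*s-1) = (2:ℝ)^(2*s-1) * d^(2*s-1) := Real.mul_rpow (by norm_num) hd0.le
        have e4 : d * d ^ (2*s-1) = d ^ (2*s) := by
          calc d * d ^ (2*s-1) = d ^ (1:ℝ) * d ^ (2*s-1) := by rw [Real.rpow_one]
            _ = d ^ (1 + (2*s-1)) := (Real.rpow_add hd0 _ _).symm
            _ = d ^ (2*s) := by ring_nf
        rw [hC, e1, e2, e3]
        apply le_of_eq
        linear_combination (((n:ℝ) - 2*s) * 2^(1-a) * 2^(2*s-1) * Vr / (1-2*s) * M) * e4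
end
end
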